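/- If φ: S → S' is a graph isomorphism from the graph of a medium (S, T) onto the graph of a medium (S', T'), then there exists a bijection β: T → T' such that (φ, β) is an isomorphism of media. -/

import Mathlib

variable {S : Type*}

/-- Result of applying message `m` (a list of tokens) to state `P`. -/
def mApply (m : List (S → S)) (P : S) : S := m.foldl (fun s τ => τ s) P

/-- `τ'` is a reverse of `τ`. -/
def IsReverse (τ τ' : S → S) : Prop := ∀ P Q : S, P ≠ Q → (τ P = Q ↔ τ' Q = P)

/-- `(S, T)` is a token system. -/
def IsTokenSystem (T : Set (S → S)) : Prop :=
  Nontrivial S ∧ T.Nonempty ∧ ∀ τ ∈ T, τ ≠ id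

/-- `m` is a message of the token system with token set `T`. -/
def IsMsg (T : Set (S → S)) (m : List (S → S)) : Prop := ∀ τ ∈ m, τ ∈ T

/-- `m` is stepwise effective for `P`. -/
def StepwiseEff : List (S → S) → S → Prop
  | [], _ => True
  | τ :: rest, P => τ P ≠ P ∧ StepwiseEff rest (τ P)

/-- `m` is consistent: it contains no token together with a reverse of it. -/
def Consistent (m : List (S → S)) : Prop :=
  ∀ τ ∈ m, ∀ τ' ∈ m, ¬ IsReverse τ τ'

/-- `m` is concise for `P`. -/
def Concise (T : Set (S → S)) (m : List (S → S)) (P : S) : Prop :=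
  IsMsg T m ∧ Consistent m ∧ StepwiseEff m P ∧ m.Nodup

/-- `m` is a return message for `P`. -/
def IsReturn (m : List (S → S)) (P : S) : Prop :=
  StepwiseEff m P ∧ mApply m P = P

/-- `m` is vacuous: its indices partition into pairs of mutually reverse tokens. -/
def Vacuous (m : List (S → S)) : Prop :=
  ∃ σ : Equiv.Perm (Fin m.length),
    (∀ i, σ i ≠ i) ∧ (∀ i, σ (σ i) = i) ∧
    ∀ i, IsReverse (m.get i) (m.get (σ i))

/-- `(S, T)` is a medium: token system satisfying [Ma] and [Mb]. -/
def IsMedium (T : Set (S → S)) : Prop :=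
  IsTokenSystem T ∧
  (∀ P Q : S, P ≠ Q → ∃ m, Concise T m P ∧ mApply m P = Q) ∧
  (∀ (m : List (S → S)) (P : S), IsMsg T m → IsReturn m P → Vacuous m)

/-- Content of a message: its set of tokens. -/
def msgContent (m : List (S → S)) : Set (S → S) := {τ | τ ∈ m}

/-- Token content of a state `P`. -/
def SContent (T : Set (S → S)) (P : S) : Set (S → S) :=
  {τ | ∃ (V : S) (m : List (S → S)), Concise T m V ∧ mApply m V = P ∧ τ ∈ m}

/-- `mr` is the reverse message `τ̃ₙ…τ̃₁` of `m = τ₁…τₙ`. -/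
def IsReverseOfMsg (m mr : List (S → S)) : Prop :=
  List.Forall₂ (fun τ τ' => IsReverse τ τ' ∧ IsReverse τ' τ) m mr.reverse

/-- The graph of a medium: states are vertices, token-adjacent states are joined. -/
def mediumGraph (T : Set (S → S)) : SimpleGraph S where
  Adj P Q := P ≠ Q ∧ ∃ τ ∈ T, τ P = Q ∨ τ Q = P
  symm := by
    constructor
    rintro P Q ⟨h, τ, hτ, hor⟩
    exact ⟨h.symm, τ, hτ, hor.symm⟩
  loopless := by
    constructor
    rintro P ⟨h, -⟩
    exact h rfl

variable {V : Type*}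

/-- The like relation on arcs of a graph:
`ab L cd` iff `d(a,c) + 1 = d(b,d) + 1 = d(a,d) = d(b,c)`. -/
def Like (G : SimpleGraph V) (a b c d : V) : Prop :=
  G.Adj a b ∧ G.Adj c d ∧
    G.dist a c + 1 = G.dist b d + 1 ∧ G.dist b d + 1 = G.dist a d ∧
    G.dist a d = G.dist b c

/-- A graph is mediatic if it is connected, bipartite, and its like relation is transitive. -/
def IsMediatic (G : SimpleGraph V) : Prop :=
  G.Connected ∧ G.Colorable 2 ∧
    ∀ a b c d e f : V, Like G a b c d → Like G c d e f → Like G a b e f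

/-!
Every token `τ` of a medium is determined by any single arc `P ⟶ τ P` it labels: an arc
`X ⟶ Y` of the graph is labelled by `τ` exactly when `P, τ P, X, Y` satisfy the distance
pattern `Like`. That pattern is metric, so a graph isomorphism `φ` carries the arcs of `τ` onto
the arcs of the token of `T'` labelling `φ P ⟶ φ (τ P)`; hence `φ ∘ τ ∘ φ⁻¹ ∈ T'`, and
conjugation by `φ` is the required bijection `T ≃ T'`.

The metric facts come from [Mb] in counting form: along two stepwise effective messages with
the same endpoints, every token `τ` and its reverse `τ̃` occur with the same difference of
multiplicities. Consequently the concise messages are exactly the geodesics of the graph.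
-/

namespace SimpleGraph

variable {α β : Type*} {G : SimpleGraph α} {G' : SimpleGraph β}

theorem edist_map_le (f : G →g G') (u v : α) : G'.edist (f u) (f v) ≤ G.edist u v :=
  le_sInf <| by
    rintro _ ⟨w, rfl⟩
    simpa using edist_le (w.map f)

theorem Iso.dist_eq (e : G ≃g G') (u v : α) : G'.dist (e u) (e v) = G.dist u v := by
  have h₁ : G'.edist (e u) (e v) ≤ G.edist u v := edist_map_le e.toHom u v
  have h₂ := edist_map_le e.symm.toHom (e u) (e v)
  simp only [RelIso.coe_toRelEmbedding, RelEmbedding.coe_toRelHom, RelIso.symm_apply_apply] at h₂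
  rw [dist, dist, le_antisymm h₁ h₂]

theorem Iso.like_iff (e : G ≃g G') {a b c d : α} :
    Like G' (e a) (e b) (e c) (e d) ↔ Like G a b c d := by
  simp only [Like, e.map_adj_iff, e.dist_eq]

end SimpleGraph

section

open scoped Classical

theorem IsReverse.symm {τ τ' : S → S} (h : IsReverse τ τ') : IsReverse τ' τ :=
  fun P Q hPQ => (h Q P hPQ.symm).symm

theorem IsReverse.unique {τ τ₁ τ₂ : S → S} (h₁ : IsReverse τ τ₁) (h₂ : IsReverse τ τ₂) :
    τ₁ = τ₂ := by
  have key : ∀ {τ₁ τ₂ : S → S}, IsReverse τ τ₁ → IsReverse τ τ₂ →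
      ∀ Q, τ₁ Q ≠ Q → τ₁ Q = τ₂ Q :=
    fun h₁ h₂ Q hQ => ((h₂ _ Q hQ).mp ((h₁ _ Q hQ).mpr rfl)).symm
  funext Q
  by_cases hQ₁ : τ₁ Q = Q
  · by_cases hQ₂ : τ₂ Q = Q
    · rw [hQ₁, hQ₂]
    · exact (key h₂ h₁ Q hQ₂).symm
  · exact key h₁ h₂ Q hQ₁

/-- Maps without a reverse are sent to themselves, so that `rev` is an involution of `S → S`. -/
noncomputable def rev (τ : S → S) : S → S :=
  if h : ∃ τ', IsReverse τ τ' then h.choose else τ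

theorem rev_eq_of_isReverse {τ τ' : S → S} (h : IsReverse τ τ') : rev τ = τ' := by
  rw [rev, dif_pos ⟨τ', h⟩]
  exact IsReverse.unique (Exists.choose_spec _) h

theorem rev_eq_self {τ : S → S} (h : ¬∃ τ', IsReverse τ τ') : rev τ = τ := dif_neg h

@[simp] theorem rev_rev (τ : S → S) : rev (rev τ) = τ := by
  by_cases h : ∃ τ', IsReverse τ τ'
  · obtain ⟨τ', h⟩ := h
    rw [rev_eq_of_isReverse h, rev_eq_of_isReverse h.symm]
  · rw [rev_eq_self h, rev_eq_self h]

theorem rev_injective : Function.Injective (rev : (S → S) → S → S) :=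
  Function.LeftInverse.injective rev_rev

variable {T : Set (S → S)}

@[simp] theorem mApply_nil (P : S) : mApply [] P = P := rfl

@[simp] theorem mApply_cons (τ : S → S) (m : List (S → S)) (P : S) :
    mApply (τ :: m) P = mApply m (τ P) := rfl

@[simp] theorem mApply_append (m n : List (S → S)) (P : S) :
    mApply (m ++ n) P = mApply n (mApply m P) :=
  List.foldl_append ..

@[simp] theorem stepwiseEff_nil (P : S) : StepwiseEff [] P := trivial

@[simp] theorem stepwiseEff_cons {τ : S → S} {m : List (S → S)} {P : S} :
    StepwiseEff (τ :: m) P ↔ τ P ≠ P ∧ StepwiseEff m (τ P) := Iff.rfl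

@[simp] theorem stepwiseEff_append {m n : List (S → S)} {P : S} :
    StepwiseEff (m ++ n) P ↔ StepwiseEff m P ∧ StepwiseEff n (mApply m P) := by
  induction m generalizing P with
  | nil => simp
  | cons τ m ih => simp [ih, and_assoc]

@[simp] theorem isMsg_nil (T : Set (S → S)) : IsMsg T [] := nofun

@[simp] theorem isMsg_cons {τ : S → S} {m : List (S → S)} :
    IsMsg T (τ :: m) ↔ τ ∈ T ∧ IsMsg T m :=
  List.forall_mem_cons

@[simp] theorem isMsg_append {m n : List (S → S)} :
    IsMsg T (m ++ n) ↔ IsMsg T m ∧ IsMsg T n :=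
  List.forall_mem_append

theorem Consistent.mono {m n : List (S → S)} (h : Consistent m) (hnm : n ⊆ m) :
    Consistent n :=
  fun τ hτ τ' hτ' => h τ (hnm hτ) τ' (hnm hτ')

theorem Concise.nodup {m : List (S → S)} {P : S} (h : Concise T m P) : m.Nodup :=
  h.2.2.2

noncomputable def revMsg (m : List (S → S)) : List (S → S) := (m.map rev).reverse

@[simp] theorem revMsg_cons (τ : S → S) (m : List (S → S)) :
    revMsg (τ :: m) = revMsg m ++ [rev τ] := by
  simp [revMsg]

@[simp] theorem mem_revMsg {τ : S → S} {m : List (S → S)} : τ ∈ revMsg m ↔ rev τ ∈ m := by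
  simp only [revMsg, List.mem_reverse, List.mem_map]
  exact ⟨fun ⟨ν, hν, h⟩ => h ▸ (rev_rev ν).symm ▸ hν, fun h => ⟨rev τ, h, rev_rev τ⟩⟩

@[simp] theorem count_revMsg (τ : S → S) (m : List (S → S)) :
    (revMsg m).count τ = m.count (rev τ) := by
  rw [revMsg, List.count_reverse, ← List.count_map_of_injective m rev rev_injective, rev_rev]

theorem Vacuous.count_le {l : List (S → S)} (h : Vacuous l) {τ τ' : S → S}
    (hr : IsReverse τ τ') : l.count τ ≤ l.count τ' := by
  obtain ⟨σ, -, -, hσ⟩ := h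
  have hcount : ∀ ν, l.count ν = (Finset.univ.filter fun i => l.get i = ν).card := fun ν =>
    (Fin.card_filter_univ_eq_vector_get_eq_count ν (⟨l, rfl⟩ : List.Vector _ l.length)).symm
  rw [hcount, hcount]
  refine Finset.card_le_card_of_injOn σ (fun i hi => ?_) σ.injective.injOn
  simp only [Finset.coe_filter, Finset.mem_univ, true_and, Set.mem_ofPred_eq] at hi ⊢
  exact (hi ▸ hσ i).unique hr

theorem Vacuous.count_rev {l : List (S → S)} (h : Vacuous l) (τ : S → S) :
    l.count (rev τ) = l.count τ := by
  by_cases hτ : ∃ τ', IsReverse τ τ'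
  · obtain ⟨τ', hτ⟩ := hτ
    rw [rev_eq_of_isReverse hτ]
    exact le_antisymm (h.count_le hτ.symm) (h.count_le hτ)
  · rw [rev_eq_self hτ]

theorem Vacuous.exists_isReverse_mem {l₁ l₂ : List (S → S)} {τ : S → S}
    (h : Vacuous (l₁ ++ τ :: l₂)) : ∃ ν ∈ l₁ ++ l₂, IsReverse τ ν := by
  obtain ⟨σ, hσ, -, hrev⟩ := h
  let i : Fin (l₁ ++ τ :: l₂).length := ⟨l₁.length, by simp⟩
  have hi : (l₁ ++ τ :: l₂).get i = τ := by simp [i]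
  refine ⟨_, ?_, hi ▸ hrev i⟩
  have hmem : _ ∈ (l₁ ++ τ :: l₂).eraseIdx l₁.length :=
    List.mem_eraseIdx_iff_getElem.mpr ⟨σ i, (σ i).2, Fin.val_ne_of_ne (hσ i), rfl⟩
  simpa [List.eraseIdx_append_of_length_le le_rfl] using hmem

theorem mediumGraph_adj_apply {τ : S → S} (hτ : τ ∈ T) {P : S} (hP : τ P ≠ P) :
    (mediumGraph T).Adj P (τ P) :=
  ⟨hP.symm, τ, hτ, .inl rfl⟩

theorem exists_walk_of_stepwiseEff {m : List (S → S)} {P : S} (hm : IsMsg T m)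
    (heff : StepwiseEff m P) :
    ∃ w : (mediumGraph T).Walk P (mApply m P), w.length = m.length := by
  induction m generalizing P with
  | nil => exact ⟨.nil, rfl⟩
  | cons τ m ih =>
    obtain ⟨hτ, hm⟩ := isMsg_cons.mp hm
    obtain ⟨hP, heff⟩ := heff
    obtain ⟨w, hw⟩ := ih hm heff
    exact ⟨.cons (mediumGraph_adj_apply hτ hP) w, congrArg (· + 1) hw⟩

namespace IsMedium

theorem exists_apply_ne (hM : IsMedium T) {τ : S → S} (hτ : τ ∈ T) : ∃ P, τ P ≠ P := by
  by_contra! h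
  exact hM.1.2.2 τ hτ (funext h)

theorem exists_concise (hM : IsMedium T) (P Q : S) :
    ∃ m, Concise T m P ∧ mApply m P = Q := by
  by_cases h : P = Q
  · exact ⟨[], ⟨nofun, nofun, trivial, List.nodup_nil⟩, h⟩
  · exact hM.2.1 P Q h

theorem exists_isReverse_mem (hM : IsMedium T) {τ : S → S} (hτ : τ ∈ T) :
    ∃ τ' ∈ T, IsReverse τ τ' := by
  obtain ⟨P, hP⟩ := hM.exists_apply_ne hτ
  obtain ⟨m, hm, hmP⟩ := hM.exists_concise (τ P) P
  have hvac : Vacuous ([] ++ τ :: m) :=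
    hM.2.2 _ P (isMsg_cons.mpr ⟨hτ, hm.1⟩) ⟨⟨hP, hm.2.2.1⟩, hmP⟩
  obtain ⟨ν, hν, hrev⟩ := hvac.exists_isReverse_mem
  exact ⟨ν, hm.1 ν hν, hrev⟩

theorem isReverse_rev (hM : IsMedium T) {τ : S → S} (hτ : τ ∈ T) : IsReverse τ (rev τ) := by
  obtain ⟨τ', -, h⟩ := hM.exists_isReverse_mem hτ
  exact rev_eq_of_isReverse h ▸ h

theorem rev_mem (hM : IsMedium T) {τ : S → S} (hτ : τ ∈ T) : rev τ ∈ T := by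
  obtain ⟨τ', hτ', h⟩ := hM.exists_isReverse_mem hτ
  exact rev_eq_of_isReverse h ▸ hτ'

theorem rev_apply_apply (hM : IsMedium T) {τ : S → S} (hτ : τ ∈ T) {P : S} (hP : τ P ≠ P) :
    rev τ (τ P) = P :=
  (hM.isReverse_rev hτ P (τ P) hP.symm).mp rfl

theorem not_isReverse_self (hM : IsMedium T) {τ : S → S} (hτ : τ ∈ T) : ¬IsReverse τ τ := by
  intro hself
  obtain ⟨P, hP⟩ := hM.exists_apply_ne hτ
  obtain ⟨m, hm, hmP⟩ := hM.exists_concise P (τ P)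
  have hback : τ (τ P) = P := (hself P (τ P) hP.symm).mp rfl
  have hvac : Vacuous (m ++ τ :: []) := hM.2.2 _ P (by simp [hm.1, hτ])
    ⟨by simp [hmP, hm.2.2.1, hback, hP.symm], by simp [hmP, hback]⟩
  obtain ⟨ν, hν, hrev⟩ := hvac.exists_isReverse_mem
  rw [List.append_nil] at hν
  exact hm.2.1 ν hν ν hν (hself.unique hrev ▸ hself)

theorem rev_ne_self (hM : IsMedium T) {τ : S → S} (hτ : τ ∈ T) : rev τ ≠ τ := by
  intro h
  have := hM.isReverse_rev hτ
  rw [h] at this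
  exact hM.not_isReverse_self hτ this

theorem isMsg_revMsg (hM : IsMedium T) {m : List (S → S)} (hm : IsMsg T m) :
    IsMsg T (revMsg m) := fun τ hτ => by
  simpa using hM.rev_mem (hm _ (mem_revMsg.mp hτ))

theorem stepwiseEff_revMsg (hM : IsMedium T) {m : List (S → S)} {P : S} (hm : IsMsg T m)
    (heff : StepwiseEff m P) :
    StepwiseEff (revMsg m) (mApply m P) ∧ mApply (revMsg m) (mApply m P) = P := by
  induction m generalizing P with
  | nil => simp [revMsg]
  | cons τ m ih =>
    obtain ⟨hτ, hm⟩ := isMsg_cons.mp hm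
    obtain ⟨hP, heff⟩ := heff
    obtain ⟨ih₁, ih₂⟩ := ih hm heff
    simp [ih₁, ih₂, hM.rev_apply_apply hτ hP, hP.symm]

/-- [Mb] in counting form. -/
theorem count_add_count_rev_eq (hM : IsMedium T) {m n : List (S → S)} {P : S}
    (hm : IsMsg T m) (hmeff : StepwiseEff m P) (hn : IsMsg T n) (hneff : StepwiseEff n P)
    (hmn : mApply m P = mApply n P) (τ : S → S) :
    m.count τ + n.count (rev τ) = m.count (rev τ) + n.count τ := by
  obtain ⟨hback₁, hback₂⟩ := hM.stepwiseEff_revMsg hn hneff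
  have hvac : Vacuous (m ++ revMsg n) :=
    hM.2.2 _ P (isMsg_append.mpr ⟨hm, hM.isMsg_revMsg hn⟩)
      ⟨stepwiseEff_append.mpr ⟨hmeff, hmn ▸ hback₁⟩, by rw [mApply_append, hmn, hback₂]⟩
  have := hvac.count_rev τ
  simp only [List.count_append, count_revMsg, rev_rev] at this
  omega

theorem count_le_count_rev_add_one (hM : IsMedium T) {m : List (S → S)} {P : S}
    (hm : IsMsg T m) (heff : StepwiseEff m P) (τ : S → S) :
    m.count τ ≤ m.count (rev τ) + 1 := by
  obtain ⟨c, hc, hcP⟩ := hM.exists_concise P (mApply m P)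
  have := hM.count_add_count_rev_eq hm heff hc.1 hc.2.2.1 hcP.symm τ
  have := List.nodup_iff_count_le_one.mp hc.nodup τ
  omega

theorem exists_apply_eq_of_adj (hM : IsMedium T) {P Q : S} (h : (mediumGraph T).Adj P Q) :
    ∃ τ ∈ T, τ P = Q := by
  obtain ⟨hPQ, τ, hτ, hτPQ | hτQP⟩ := h
  · exact ⟨τ, hτ, hτPQ⟩
  · exact ⟨rev τ, hM.rev_mem hτ, hτQP ▸ hM.rev_apply_apply hτ (by rwa [hτQP])⟩

theorem exists_msg_of_walk (hM : IsMedium T) {P Q : S} (w : (mediumGraph T).Walk P Q) :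
    ∃ m, IsMsg T m ∧ StepwiseEff m P ∧ mApply m P = Q ∧ m.length = w.length := by
  induction w with
  | nil => exact ⟨[], isMsg_nil T, trivial, rfl, rfl⟩
  | cons hadj _ ih =>
    obtain ⟨τ, hτ, rfl⟩ := hM.exists_apply_eq_of_adj hadj
    obtain ⟨m, hm, heff, rfl, hlen⟩ := ih
    exact ⟨τ :: m, isMsg_cons.mpr ⟨hτ, hm⟩, ⟨hadj.ne.symm, heff⟩, rfl, by simp [hlen]⟩

theorem connected (hM : IsMedium T) : (mediumGraph T).Connected := by
  have := hM.1.1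
  refine ⟨fun P Q => ?_⟩
  obtain ⟨m, hm, rfl⟩ := hM.exists_concise P Q
  exact (exists_walk_of_stepwiseEff hm.1 hm.2.2.1).elim fun w _ => w.reachable

end IsMedium

theorem Concise.rev_not_mem (hM : IsMedium T) {m : List (S → S)} {P : S}
    (hm : Concise T m P) {τ : S → S} (hτ : τ ∈ m) : rev τ ∉ m :=
  fun h => hm.2.1 τ hτ (rev τ) h (hM.isReverse_rev (hm.1 τ hτ))

theorem Concise.apply_mApply_of_mem (hM : IsMedium T) {m : List (S → S)} {P : S}
    (hm : Concise T m P) {τ : S → S} (hτ : τ ∈ m) : τ (mApply m P) = mApply m P := by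
  by_contra hne
  have := hM.count_le_count_rev_add_one (m := m ++ [τ]) (P := P)
    (by simp [hm.1, hm.1 τ hτ]) (by simp [hm.2.2.1, hne]) τ
  simp [List.count_eq_one_of_mem hm.nodup hτ, List.count_eq_zero.mpr (hm.rev_not_mem hM hτ),
    (hM.rev_ne_self (hm.1 τ hτ)).symm] at this

theorem Concise.rev_apply_of_mem (hM : IsMedium T) {m : List (S → S)} {P : S}
    (hm : Concise T m P) {τ : S → S} (hτ : τ ∈ m) : rev τ P = P := by
  by_contra hne
  have hτT := hm.1 τ hτ
  have hback : τ (rev τ P) = P := by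
    simpa using hM.rev_apply_apply (hM.rev_mem hτT) hne
  have := hM.count_le_count_rev_add_one (m := τ :: m) (P := rev τ P)
    (by simp [hm.1, hτT]) (by simp [hback, hm.2.2.1, Ne.symm hne]) τ
  simp [List.count_eq_one_of_mem hm.nodup hτ, List.count_eq_zero.mpr (hm.rev_not_mem hM hτ),
    (hM.rev_ne_self hτT).symm] at this

theorem Concise.subset (hM : IsMedium T) {c n : List (S → S)} {P : S} (hc : Concise T c P)
    (hn : IsMsg T n) (hneff : StepwiseEff n P) (hcn : mApply c P = mApply n P) : c ⊆ n := by
  intro τ hτ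
  have := hM.count_add_count_rev_eq hc.1 hc.2.2.1 hn hneff hcn τ
  rw [List.count_eq_one_of_mem hc.nodup hτ,
    List.count_eq_zero.mpr (hc.rev_not_mem hM hτ)] at this
  exact List.count_pos_iff.mp (by omega)

theorem Concise.length_eq_dist (hM : IsMedium T) {m : List (S → S)} {P : S}
    (hm : Concise T m P) : m.length = (mediumGraph T).dist P (mApply m P) := by
  obtain ⟨w, hw⟩ := hM.connected.exists_walk_length_eq_dist P (mApply m P)
  obtain ⟨n, hn, hneff, hnP, hlen⟩ := hM.exists_msg_of_walk w
  obtain ⟨w', hw'⟩ := exists_walk_of_stepwiseEff hm.1 hm.2.2.1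
  refine le_antisymm ?_ (hw' ▸ SimpleGraph.dist_le w')
  calc m.length ≤ n.length := (hm.nodup.subperm (hm.subset hM hn hneff hnP.symm)).length_le
    _ = _ := hlen.trans hw

theorem Consistent.cons (hM : IsMedium T) {m : List (S → S)} (hm : Consistent m) {τ : S → S}
    (hτ : τ ∈ T) (hrev : rev τ ∉ m) : Consistent (τ :: m) := by
  have hrev' : ∀ ν ∈ m, ¬IsReverse τ ν := fun ν hν h => hrev (rev_eq_of_isReverse h ▸ hν)
  rintro a (_ | ⟨_, ha⟩) b (_ | ⟨_, hb⟩)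
  · exact hM.not_isReverse_self hτ
  · exact hrev' b hb
  · exact fun h => hrev' a ha h.symm
  · exact hm a ha b hb

theorem Concise.append_singleton (hM : IsMedium T) {m : List (S → S)} {τ : S → S} {P : S}
    (hm : Concise T m P) (hτ : τ ∈ T) (hX : τ (mApply m P) ≠ mApply m P) (hτm : τ ∉ m)
    (hrev : rev τ ∉ m) : Concise T (m ++ [τ]) P :=
  ⟨isMsg_append.mpr ⟨hm.1, by simp [hτ]⟩,
    (hm.2.1.cons hM hτ hrev).mono (List.perm_append_singleton τ m).subset,
    stepwiseEff_append.mpr ⟨hm.2.2.1, hX, trivial⟩,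
    (List.perm_append_singleton τ m).nodup_iff.mpr (List.nodup_cons.mpr ⟨hτm, hm.nodup⟩)⟩

theorem Concise.not_mem_of_apply_ne (hM : IsMedium T) {m : List (S → S)} {P : S}
    (hm : Concise T m P) {τ : S → S} (hP : τ P ≠ P) (hX : τ (mApply m P) ≠ mApply m P) :
    τ ∉ m ∧ rev τ ∉ m :=
  ⟨fun h => hX (hm.apply_mApply_of_mem hM h),
    fun h => hP (by simpa using hm.rev_apply_of_mem hM h)⟩

namespace IsMedium

theorem concise_of_length_eq_dist (hM : IsMedium T) {n : List (S → S)} {P : S}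
    (hn : IsMsg T n) (hneff : StepwiseEff n P)
    (hlen : n.length = (mediumGraph T).dist P (mApply n P)) : Concise T n P := by
  obtain ⟨c, hc, hcP⟩ := hM.exists_concise P (mApply n P)
  have hperm : c.Perm n := (hc.nodup.subperm (hc.subset hM hn hneff hcP)).perm_of_length_le
    (by rw [hlen, ← hcP, ← hc.length_eq_dist hM])
  exact ⟨hn, hc.2.1.mono hperm.symm.subset, hneff, hperm.nodup_iff.mp hc.nodup⟩

theorem dist_apply_right (hM : IsMedium T) {τ : S → S} (hτ : τ ∈ T) {P X : S}
    (hP : τ P ≠ P) (hX : τ X ≠ X) :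
    (mediumGraph T).dist P (τ X) = (mediumGraph T).dist P X + 1 := by
  obtain ⟨m, hm, rfl⟩ := hM.exists_concise P X
  obtain ⟨hτm, hrev⟩ := hm.not_mem_of_apply_ne hM hP hX
  have := (hm.append_singleton hM hτ hX hτm hrev).length_eq_dist hM
  rw [List.length_append, hm.length_eq_dist hM, mApply_append] at this
  exact this.symm

theorem dist_apply_apply (hM : IsMedium T) {τ : S → S} (hτ : τ ∈ T) {P X : S}
    (hP : τ P ≠ P) (hX : τ X ≠ X) :
    (mediumGraph T).dist (τ P) (τ X) = (mediumGraph T).dist P X := by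
  refine le_antisymm ?_ ?_
  · obtain ⟨m, hm, rfl⟩ := hM.exists_concise P X
    obtain ⟨hτm, hrev⟩ := hm.not_mem_of_apply_ne hM hP hX
    obtain ⟨c, hc, hcX⟩ := hM.exists_concise (τ P) (τ (mApply m P))
    have hback := hM.rev_apply_apply hτ hP
    have hsub : c ⊆ rev τ :: (m ++ [τ]) := hc.subset hM (by simp [hM.rev_mem hτ, hm.1, hτ])
      ⟨by rwa [hback, ne_comm], by simpa [hback] using ⟨hm.2.2.1, hX⟩⟩ (by simp [hcX, hback])
    have hcm : c ⊆ m := by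
      intro ν hν
      rcases List.mem_cons.mp (hsub hν) with rfl | hν'
      · have := hc.apply_mApply_of_mem hM hν
        rw [hcX, hM.rev_apply_apply hτ hX] at this
        exact absurd this.symm hX
      · rcases List.mem_append.mp hν' with hνm | hντ
        · exact hνm
        · obtain rfl := List.mem_singleton.mp hντ
          exact absurd (hc.rev_apply_of_mem hM hν) (by rw [hback]; exact hP.symm)
    rw [← hcX, ← hc.length_eq_dist hM, ← hm.length_eq_dist hM]
    exact (hc.nodup.subperm hcm).length_le
  · have htri := hM.connected.dist_triangle (u := τ P) (v := τ X) (w := X)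
    rw [SimpleGraph.dist_comm (u := τ X),
      SimpleGraph.dist_eq_one_iff_adj.mpr (mediumGraph_adj_apply hτ hX), SimpleGraph.dist_comm,
      hM.dist_apply_right hτ hX hP, SimpleGraph.dist_comm] at htri
    omega

theorem like_of_apply_ne (hM : IsMedium T) {τ : S → S} (hτ : τ ∈ T) {P X : S}
    (hP : τ P ≠ P) (hX : τ X ≠ X) : Like (mediumGraph T) P (τ P) X (τ X) := by
  have hleft := hM.dist_apply_right hτ hX hP
  rw [SimpleGraph.dist_comm, SimpleGraph.dist_comm (u := X)] at hleft
  exact ⟨mediumGraph_adj_apply hτ hP, mediumGraph_adj_apply hτ hX,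
    by rw [hM.dist_apply_apply hτ hP hX],
    by rw [hM.dist_apply_apply hτ hP hX, hM.dist_apply_right hτ hP hX],
    by rw [hM.dist_apply_right hτ hP hX, hleft]⟩

theorem apply_eq_of_like (hM : IsMedium T) {τ : S → S} (hτ : τ ∈ T) {P X Y : S}
    (hP : τ P ≠ P) (h : Like (mediumGraph T) P (τ P) X Y) : τ X = Y := by
  obtain ⟨-, hXY, hd₁, hd₂, hd₃⟩ := h
  obtain ⟨ρ, hρ, rfl⟩ := hM.exists_apply_eq_of_adj hXY
  obtain ⟨m, hm, hmX⟩ := hM.exists_concise P X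
  obtain ⟨c, hc, hcY⟩ := hM.exists_concise (τ P) (ρ X)
  have hback := hM.rev_apply_apply hτ hP
  have hτc : Concise T (τ :: c) P := hM.concise_of_length_eq_dist
    (isMsg_cons.mpr ⟨hτ, hc.1⟩) ⟨hP, hc.2.2.1⟩
    (by rw [List.length_cons, hc.length_eq_dist hM, mApply_cons, hcY]; omega)
  have hrevm : Concise T (rev τ :: m) (τ P) := hM.concise_of_length_eq_dist
    (isMsg_cons.mpr ⟨hM.rev_mem hτ, hm.1⟩) ⟨by rwa [hback, ne_comm], by rw [hback]; exact hm.2.2.1⟩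
    (by rw [List.length_cons, hm.length_eq_dist hM, mApply_cons, hback, hmX]; omega)
  have hrevc : rev τ ∉ c := fun h =>
    hτc.rev_not_mem hM List.mem_cons_self (List.mem_cons_of_mem _ h)
  have hτm : τ ∉ m := fun h =>
    hrevm.rev_not_mem hM List.mem_cons_self (List.mem_cons_of_mem _ ((rev_rev τ).symm ▸ h))
  suffices ρ = τ by rw [this]
  by_contra hρτ
  have := hM.count_add_count_rev_eq (m := τ :: c) (n := m ++ [ρ]) hτc.1 hτc.2.2.1
    (isMsg_append.mpr ⟨hm.1, by simp [hρ]⟩)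
    (stepwiseEff_append.mpr ⟨hm.2.2.1, by rw [hmX]; exact ⟨hXY.ne.symm, trivial⟩⟩)
    (by simp [hcY, hmX]) τ
  simp [List.count_eq_zero.mpr hrevc, List.count_eq_zero.mpr hτm, hρτ,
    (hM.rev_ne_self hτ).symm] at this

variable {S' : Type*} {T' : Set (S' → S')}

theorem apply_eq_of_iso (hM : IsMedium T) (hM' : IsMedium T')
    (e : mediumGraph T ≃g mediumGraph T') {τ : S → S} {μ : S' → S'} (hτ : τ ∈ T) (hμ : μ ∈ T')
    {P : S} (hP : τ P ≠ P) (hPμ : μ (e P) = e (τ P)) {X : S} (hX : τ X ≠ X) :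
    μ (e X) = e (τ X) := by
  refine hM'.apply_eq_of_like hμ (by rw [hPμ]; exact e.injective.ne hP) ?_
  rw [hPμ]
  exact e.like_iff.mpr (hM.like_of_apply_ne hτ hP hX)

theorem comp_mem_of_iso (hM : IsMedium T) (hM' : IsMedium T')
    (e : mediumGraph T ≃g mediumGraph T') {τ : S → S} (hτ : τ ∈ T) : ⇑e ∘ τ ∘ ⇑e.symm ∈ T' := by
  obtain ⟨P, hP⟩ := hM.exists_apply_ne hτ
  obtain ⟨μ, hμ, hPμ⟩ :=
    hM'.exists_apply_eq_of_adj (e.map_adj_iff.mpr (mediumGraph_adj_apply hτ hP))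
  suffices h : ∀ X, μ (e X) = e (τ X) by
    convert hμ using 1
    funext Y
    simpa using (h (e.symm Y)).symm
  intro X
  by_cases hX : τ X = X
  · by_contra hne
    rw [hX] at hne
    have := hM'.apply_eq_of_iso hM e.symm hμ hτ (P := e P)
      (by rw [hPμ]; exact e.injective.ne hP) (by simp [hPμ]) hne
    simp only [RelIso.symm_apply_apply, hX] at this
    exact hne (by simpa using (congrArg e this).symm)
  · exact hM.apply_eq_of_iso hM' e hτ hμ hP hPμ hX

end IsMedium

end

/-- A graph isomorphism between the graphs of two media lifts to an isomorphism
of the media themselves. -/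
theorem stmt19 {S' : Type*} {T : Set (S → S)} {T' : Set (S' → S')}
    (hM : IsMedium T) (hM' : IsMedium T')
    (φ : S ≃ S')
    (hφ : ∀ P Q : S, (mediumGraph T).Adj P Q ↔ (mediumGraph T').Adj (φ P) (φ Q)) :
    ∃ β : T ≃ T', ∀ (P Q : S) (τ : S → S) (hτ : τ ∈ T),
      τ P = Q ↔ (β ⟨τ, hτ⟩ : S' → S') (φ P) = φ Q := by
  let e : mediumGraph T ≃g mediumGraph T' := ⟨φ, fun {P Q} => (hφ P Q).symm⟩
  have he : ⇑e = φ := rfl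
  have he' : ⇑e.symm = φ.symm := rfl
  refine ⟨(φ.arrowCongr φ).subtypeEquiv fun τ => ⟨hM.comp_mem_of_iso hM' e, fun h => ?_⟩,
    fun P Q τ hτ => ?_⟩
  · simpa [he, he', Function.comp_def] using hM'.comp_mem_of_iso hM e.symm h
  · simp [Equiv.arrowCongr_apply]
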